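/- Let w_1, ..., w_s be positive integer weights and let M_0, M_1, ..., M_r be a Hungarian sequence with r ≤ ⌈s/2⌉. Then for every i with 0 ≤ i ≤ r − 2, there exist maximal chains C_1 and C_2 of M_i (each possibly an empty chain) such that M_{i+2} = (M_i ∖ (C_1 ∪ C_2)) ∪ (Aug(C_1) ∪ Aug(C_2)). -/
import Mathlib


/-- A matching in the line graph with edges `e_1, …, e_s`: a subset of `{1, …, s}`
containing no two consecutive integers. -/
def IsMatching (s : ℕ) (M : Finset ℕ) : Prop :=
  M ⊆ Finset.Icc 1 s ∧ ∀ i ∈ M, i + 1 ∉ M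

/-- The chain `{i, i+2, …, i+2(t-1)}` with `t` elements (empty when `t = 0`). -/
def chainSet (i t : ℕ) : Finset ℕ :=
  (Finset.range t).image (fun j => i + 2 * j)

/-- The augmentation of the chain `chainSet i t`: for `t ≥ 1` it is
`{i-1, i+1, i+3, …, i+2(t-1)+1} ∩ {1, …, s}`; for the `i`-th empty chain (`t = 0`)
it is `{i}`. -/
def augSet (s i t : ℕ) : Finset ℕ :=
  if t = 0 then {i}
  else ((Finset.range (t + 1)).image (fun j => i - 1 + 2 * j)) ∩ Finset.Icc 1 s

/-- `chainSet i t` is a maximal chain of `M` (for `t = 0`, the `i`-th empty chain). -/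
def IsMaximalChain (s : ℕ) (M : Finset ℕ) (i t : ℕ) : Prop :=
  if t = 0 then
    i ∈ Finset.Icc 1 s ∧ (i - 1) ∉ M ∧ i ∉ M ∧ (i + 1) ∉ M
  else
    chainSet i t ⊆ M ∧ (i - 2) ∉ M ∧ (i + 2 * t) ∉ M

/-- `M'` is an augmentation of the matching `M`: it is a matching of the form
`(M ∖ C) ∪ Aug(C)` for some maximal chain `C` of `M` (possibly an empty chain),
with `|M'| = |M| + 1`. -/
def IsAugmentation (s : ℕ) (M M' : Finset ℕ) : Prop :=
  IsMatching s M' ∧ M'.card = M.card + 1 ∧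
    ∃ i t, IsMaximalChain s M i t ∧ M' = (M \ chainSet i t) ∪ augSet s i t

/-- The weight of a matching: the sum of the weights of its edges. -/
def wt (w : ℕ → ℕ) (M : Finset ℕ) : ℕ := ∑ i ∈ M, w i

/-- A Hungarian sequence `M 0, M 1, …, M r`: it starts with the empty matching, and
each `M i` (for `1 ≤ i ≤ r`) is an augmentation of `M (i-1)` of minimum weight among
all augmentations of `M (i-1)`. -/
def IsHungarianSeq (s : ℕ) (w : ℕ → ℕ) (r : ℕ) (M : ℕ → Finset ℕ) : Prop :=
  M 0 = ∅ ∧ ∀ i, 1 ≤ i → i ≤ r →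
    IsAugmentation s (M (i - 1)) (M i) ∧
    ∀ M' : Finset ℕ, IsAugmentation s (M (i - 1)) M' → wt w (M i) ≤ wt w M'

lemma mem_prog {c n x : ℕ} :
    x ∈ (Finset.range n).image (fun k => c + 2 * k) ↔
      c ≤ x ∧ x < c + 2 * n ∧ (x - c) % 2 = 0 := by
  simp only [Finset.mem_image, Finset.mem_range]
  constructor
  · rintro ⟨k, hk, rfl⟩; omega
  · rintro ⟨h1, h2, h3⟩; exact ⟨(x - c) / 2, by omega, by omega⟩

lemma mem_chainSet {i t x : ℕ} :
    x ∈ chainSet i t ↔ i ≤ x ∧ x < i + 2 * t ∧ (x - i) % 2 = 0 := mem_prog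

lemma card_chainSet (i t : ℕ) : (chainSet i t).card = t := by
  rw [chainSet, Finset.card_image_of_injective _ (fun a b h => by omega), Finset.card_range]

lemma step (s : ℕ) (M M1 : Finset ℕ) (hM : M ⊆ Finset.Icc 1 s)
    (h : IsAugmentation s M M1) :
    ∃ a t, IsMaximalChain s M a t ∧
      M1 = (M \ chainSet a t) ∪ augSet s a t ∧
      (∀ x ∈ augSet s a t, x ∉ M) ∧
      (t ≠ 0 → 2 ≤ a ∧ a - 1 + 2 * t ≤ s ∧
        augSet s a t = (Finset.range (t + 1)).image (fun k => a - 1 + 2 * k)) := by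
  obtain ⟨hm1, hcard, a, t, hmax, heq⟩ := h
  by_cases ht : t = 0
  · subst ht
    rw [IsMaximalChain, if_pos rfl] at hmax
    refine ⟨a, 0, by rw [IsMaximalChain, if_pos rfl]; exact hmax, heq, ?_, by tauto⟩
    intro x hx
    rw [augSet, if_pos rfl, Finset.mem_singleton] at hx
    subst hx; exact hmax.2.2.1
  · have hmax' := hmax
    rw [IsMaximalChain, if_neg ht] at hmax'
    obtain ⟨hsub, ham2, hatop⟩ := hmax'
    have haM : a ∈ M := hsub (mem_chainSet.mpr ⟨le_refl a, by omega, by omega⟩)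
    have ha1 : 1 ≤ a := (Finset.mem_Icc.mp (hM haM)).1
    have htM : t ≤ M.card := by
      have := Finset.card_le_card hsub
      rwa [card_chainSet] at this
    have hsd : (M \ chainSet a t).card = M.card - t := by
      rw [Finset.card_sdiff_of_subset hsub, card_chainSet]
    have hAle : (augSet s a t).card ≤ t + 1 := by
      rw [augSet, if_neg ht]
      calc ((Finset.range (t + 1)).image (fun j => a - 1 + 2 * j) ∩ Finset.Icc 1 s).card
          ≤ ((Finset.range (t + 1)).image (fun j => a - 1 + 2 * j)).card :=
            Finset.card_le_card Finset.inter_subset_left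
        _ ≤ (Finset.range (t + 1)).card := Finset.card_image_le
        _ = t + 1 := Finset.card_range _
    have hAge : t + 1 ≤ (augSet s a t).card := by
      have hle := Finset.card_union_le (M \ chainSet a t) (augSet s a t)
      rw [← heq, hcard, hsd] at hle
      omega
    have hAcard : (augSet s a t).card = t + 1 := le_antisymm hAle hAge
    have hAim : augSet s a t = (Finset.range (t + 1)).image (fun k => a - 1 + 2 * k) := by
      rw [augSet, if_neg ht]
      apply Finset.eq_of_subset_of_card_le Finset.inter_subset_left
      have h1 : ((Finset.range (t + 1)).image (fun j => a - 1 + 2 * j)).card ≤ t + 1 := by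
        calc ((Finset.range (t + 1)).image (fun j => a - 1 + 2 * j)).card
            ≤ (Finset.range (t + 1)).card := Finset.card_image_le
          _ = t + 1 := Finset.card_range _
      have h2 : ((Finset.range (t + 1)).image (fun j => a - 1 + 2 * j) ∩ Finset.Icc 1 s).card = t + 1 := by
        rw [augSet, if_neg ht] at hAcard; exact hAcard
      omega
    have hIcc : ∀ k ≤ t, a - 1 + 2 * k ∈ Finset.Icc 1 s := by
      intro k hk
      have hsub2 : (Finset.range (t + 1)).image (fun j => a - 1 + 2 * j) ⊆ Finset.Icc 1 s := by
        have : (Finset.range (t + 1)).image (fun j => a - 1 + 2 * j) ∩ Finset.Icc 1 s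
            = (Finset.range (t + 1)).image (fun j => a - 1 + 2 * j) := by
          rw [augSet, if_neg ht] at hAim; exact hAim
        exact Finset.inter_eq_left.mp this
      exact hsub2 (Finset.mem_image.mpr ⟨k, Finset.mem_range.mpr (by omega), rfl⟩)
    have ha2 : 2 ≤ a := by
      have := Finset.mem_Icc.mp (hIcc 0 (by omega))
      omega
    have has : a - 1 + 2 * t ≤ s := by
      have := Finset.mem_Icc.mp (hIcc t (le_refl t))
      omega
    -- disjointness
    have hinter : ((M \ chainSet a t) ∩ augSet s a t).card = 0 := by
      have := Finset.card_union_add_card_inter (M \ chainSet a t) (augSet s a t)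
      rw [← heq, hcard, hsd, hAcard] at this
      omega
    have hdisj : ∀ x ∈ augSet s a t, x ∉ M \ chainSet a t := by
      intro x hx hxM
      have : x ∈ (M \ chainSet a t) ∩ augSet s a t := Finset.mem_inter.mpr ⟨hxM, hx⟩
      rw [Finset.card_eq_zero] at hinter
      rw [hinter] at this
      exact absurd this (Finset.notMem_empty x)
    refine ⟨a, t, hmax, heq, ?_, fun _ => ⟨ha2, has, hAim⟩⟩
    intro x hx hxM
    by_cases hxC : x ∈ chainSet a t
    · rw [mem_chainSet] at hxC
      rw [hAim, mem_prog] at hx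
      omega
    · exact hdisj x hx (Finset.mem_sdiff.mpr ⟨hxM, hxC⟩)

lemma caseB_eq (Mi A C C' A' : Finset ℕ) (hd : ∀ x ∈ C', x ∉ A) :
    ((Mi \ C ∪ A) \ C') ∪ A' = (Mi \ (C ∪ C')) ∪ (A ∪ A') := by
  ext x
  simp only [Finset.mem_union, Finset.mem_sdiff]
  have := hd x
  tauto

lemma caseC_eq (Mi A C C' A' L R G1 G2 : Finset ℕ)
    (hdec1 : ∀ x, x ∈ C' ↔ (x ∈ L ∨ x ∈ A ∨ x ∈ R))
    (hdec2 : ∀ x, x ∈ A' ↔ (x ∈ G1 ∨ x ∈ C ∨ x ∈ G2))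
    (hCX : ∀ x ∈ C, x ∈ Mi)
    (hCLR : ∀ x ∈ C, ¬(x ∈ L ∨ x ∈ R))
    (hdA : ∀ x ∈ A, x ∉ Mi) :
    ((Mi \ C ∪ A) \ C') ∪ A' = (Mi \ (L ∪ R)) ∪ (G1 ∪ G2) := by
  ext x
  simp only [Finset.mem_union, Finset.mem_sdiff]
  constructor
  · rintro (⟨h1, h2⟩ | h3)
    · rcases h1 with ⟨hXx, hCx⟩ | hAx
      · left
        refine ⟨hXx, fun hc => h2 ((hdec1 x).mpr (by tauto))⟩
      · exact absurd ((hdec1 x).mpr (Or.inr (Or.inl hAx))) h2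
    · rcases (hdec2 x).mp h3 with h | h | h
      · right; left; exact h
      · exact Or.inl ⟨hCX x h, hCLR x h⟩
      · right; right; exact h
  · rintro (⟨hXx, hLR⟩ | hAug)
    · by_cases hxC : x ∈ C
      · exact Or.inr ((hdec2 x).mpr (Or.inr (Or.inl hxC)))
      · left
        refine ⟨Or.inl ⟨hXx, hxC⟩, fun hc => ?_⟩
        rcases (hdec1 x).mp hc with h | h | h
        · exact hLR (Or.inl h)
        · exact hdA x h hXx
        · exact hLR (Or.inr h)
    · rcases hAug with h | h
      · exact Or.inr ((hdec2 x).mpr (Or.inl h))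
      · exact Or.inr ((hdec2 x).mpr (Or.inr (Or.inr h)))

/-- For positive weights `w_1, …, w_s` and a Hungarian sequence `M_0, …, M_r` with
`r ≤ ⌈s/2⌉`: for every `i` with `i + 2 ≤ r` there exist maximal chains `C₁` and `C₂`
of `M i` (each possibly an empty chain) such that
`M (i+2) = (M i ∖ (C₁ ∪ C₂)) ∪ (Aug(C₁) ∪ Aug(C₂))`. -/
theorem stmt_8 (s : ℕ) (w : ℕ → ℕ) (hw : ∀ i, 1 ≤ i → i ≤ s → 0 < w i)
    (r : ℕ) (hr : r ≤ (s + 1) / 2) (M : ℕ → Finset ℕ)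
    (hH : IsHungarianSeq s w r M)
    (i : ℕ) (hi : i + 2 ≤ r) :
    ∃ i₁ t₁ i₂ t₂, IsMaximalChain s (M i) i₁ t₁ ∧ IsMaximalChain s (M i) i₂ t₂ ∧
      M (i + 2) =
        (M i \ (chainSet i₁ t₁ ∪ chainSet i₂ t₂)) ∪ (augSet s i₁ t₁ ∪ augSet s i₂ t₂) := by
  obtain ⟨h0, hstep⟩ := hH
  have h1 := (hstep (i + 1) (by omega) (by omega)).1
  have h2 := (hstep (i + 2) (by omega) (by omega)).1
  have e1 : i + 1 - 1 = i := by omega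
  have e2 : i + 2 - 1 = i + 1 := by omega
  rw [e1] at h1
  rw [e2] at h2
  have hXmat : IsMatching s (M i) := by
    rcases Nat.eq_zero_or_pos i with hi0 | hip
    · subst hi0; rw [h0]
      exact ⟨Finset.empty_subset _, by simp⟩
    · exact (hstep i hip (by omega)).1.1
  have hYmat : IsMatching s (M (i + 1)) := h1.1
  obtain ⟨a, t, hct, hYeq, hdA, hfulla⟩ := step s (M i) (M (i + 1)) hXmat.1 h1
  obtain ⟨b, u, hcu, hZeq, hdB, hfullb⟩ := step s (M (i + 1)) (M (i + 2)) hYmat.1 h2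
  have hYmem : ∀ x, x ∈ M (i + 1) ↔ ((x ∈ M i ∧ x ∉ chainSet a t) ∨ x ∈ augSet s a t) := by
    intro x; rw [hYeq]; simp [Finset.mem_union, Finset.mem_sdiff]
  have toC : ∀ x, x ∈ M i → x ∉ M (i + 1) → x ∈ chainSet a t := by
    intro x hx1 hx2
    by_contra hc
    exact hx2 ((hYmem x).mpr (Or.inl ⟨hx1, hc⟩))
  rcases Nat.eq_zero_or_pos u with hu0 | hupos
  · -- Case A : u = 0
    subst hu0
    rw [IsMaximalChain, if_pos rfl] at hcu
    obtain ⟨hbIcc, hb1, hb0, hbp⟩ := hcu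
    refine ⟨a, t, b, 0, hct, ?_, ?_⟩
    · rw [IsMaximalChain, if_pos rfl]
      refine ⟨hbIcc, ?_, ?_, ?_⟩
      · -- b - 1 ∉ M i
        intro h
        have hb1' : 1 ≤ b - 1 := (Finset.mem_Icc.mp (hXmat.1 h)).1
        have hc := toC _ h hb1
        rw [mem_chainSet] at hc
        have ht : t ≠ 0 := by omega
        obtain ⟨ha2, has, hAim⟩ := hfulla ht
        have : b ∈ augSet s a t := by rw [hAim, mem_prog]; omega
        exact hb0 ((hYmem b).mpr (Or.inr this))
      · -- b ∉ M i
        intro h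
        have hc := toC _ h hb0
        rw [mem_chainSet] at hc
        have ht : t ≠ 0 := by omega
        obtain ⟨ha2, has, hAim⟩ := hfulla ht
        have : b - 1 ∈ augSet s a t := by rw [hAim, mem_prog]; omega
        exact hb1 ((hYmem (b - 1)).mpr (Or.inr this))
      · -- b + 1 ∉ M i
        intro h
        have hc := toC _ h hbp
        rw [mem_chainSet] at hc
        have ht : t ≠ 0 := by omega
        obtain ⟨ha2, has, hAim⟩ := hfulla ht
        have : b ∈ augSet s a t := by rw [hAim, mem_prog]; omega
        exact hb0 ((hYmem b).mpr (Or.inr this))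
    · rw [hZeq, hYeq]
      have ec : chainSet b 0 = ∅ := by
        ext x; rw [mem_chainSet]; simp; omega
      have ea : augSet s b 0 = {b} := by rw [augSet, if_pos rfl]
      rw [ec, ea]
      ext x
      simp only [Finset.mem_union, Finset.mem_sdiff, Finset.union_empty,
        Finset.sdiff_empty, Finset.notMem_empty, Finset.mem_singleton]
      tauto
  · -- u ≥ 1
    have hu0 : u ≠ 0 := hupos.ne'
    rw [IsMaximalChain, if_neg hu0] at hcu
    obtain ⟨hsubY, hbm2, hbp⟩ := hcu
    obtain ⟨hb2, hbs, hBim⟩ := hfullb hu0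
    by_cases hdisj : ∀ x ∈ chainSet b u, x ∉ augSet s a t
    · -- Case B : second chain disjoint from first augmentation
      have hsubX : chainSet b u ⊆ M i := by
        intro x hx
        rcases (hYmem x).mp (hsubY hx) with ⟨h, _⟩ | h
        · exact h
        · exact absurd h (hdisj x hx)
      refine ⟨a, t, b, u, hct, ?_, ?_⟩
      · rw [IsMaximalChain, if_neg hu0]
        refine ⟨hsubX, ?_, ?_⟩
        · -- b - 2 ∉ M i
          intro h
          have hb3 : 1 ≤ b - 2 := (Finset.mem_Icc.mp (hXmat.1 h)).1
          have hc := toC _ h hbm2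
          rw [mem_chainSet] at hc
          have ht : t ≠ 0 := by omega
          obtain ⟨ha2, has, hAim⟩ := hfulla ht
          have hbY : b ∈ M (i + 1) := hsubY (mem_chainSet.mpr (by omega))
          have hb1A : b - 1 ∈ augSet s a t := by rw [hAim, mem_prog]; omega
          have hb1Y : b - 1 ∈ M (i + 1) := (hYmem _).mpr (Or.inr hb1A)
          have hmm := hYmat.2 (b - 1) hb1Y
          rw [show b - 1 + 1 = b by omega] at hmm
          exact hmm hbY
        · -- b + 2u ∉ M i
          intro h
          have hc := toC _ h hbp
          rw [mem_chainSet] at hc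
          have ht : t ≠ 0 := by omega
          obtain ⟨ha2, has, hAim⟩ := hfulla ht
          have h1Y : b + 2 * (u - 1) ∈ M (i + 1) := hsubY (mem_chainSet.mpr (by omega))
          have h2A : b + 2 * u - 1 ∈ augSet s a t := by rw [hAim, mem_prog]; omega
          have h2Y : b + 2 * u - 1 ∈ M (i + 1) := (hYmem _).mpr (Or.inr h2A)
          have hmm := hYmat.2 _ h1Y
          rw [show b + 2 * (u - 1) + 1 = b + 2 * u - 1 by omega] at hmm
          exact hmm h2Y
      · rw [hZeq, hYeq]
        exact caseB_eq _ _ _ _ _ hdisj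
    · -- Case C : overlap
      push_neg at hdisj
      obtain ⟨x₀, hx₀C, hx₀A⟩ := hdisj
      obtain ⟨α, m, hαpos, hAa, hCc, hCX, hαm1X, hα0X, hαtop0X, hαtop1X⟩ :
          ∃ α m, 1 ≤ α ∧
            (∀ x, x ∈ augSet s a t ↔ (α ≤ x ∧ x < α + 2 * (m + 1) ∧ (x - α) % 2 = 0)) ∧
            (∀ x, x ∈ chainSet a t ↔ (α + 1 ≤ x ∧ x < α + 1 + 2 * m ∧ (x - (α + 1)) % 2 = 0)) ∧
            (∀ x ∈ chainSet a t, x ∈ M i) ∧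
            (α - 1 ∉ M i) ∧ (α ∉ M i) ∧ (α + 2 * m ∉ M i) ∧ (α + 2 * m + 1 ∉ M i) := by
        rcases Nat.eq_zero_or_pos t with ht0 | htp
        · subst ht0
          rw [IsMaximalChain, if_pos rfl] at hct
          obtain ⟨haIcc, ha1, ha2', ha3⟩ := hct
          have ha1' : 1 ≤ a := (Finset.mem_Icc.mp haIcc).1
          refine ⟨a, 0, ha1', ?_, ?_, ?_, ha1, ha2', by simpa using ha2', by simpa using ha3⟩
          · intro x
            rw [augSet, if_pos rfl, Finset.mem_singleton]
            omega
          · intro x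
            rw [mem_chainSet]
            omega
          · intro x hx
            rw [mem_chainSet] at hx
            omega
        · have ht : t ≠ 0 := htp.ne'
          have hct' := hct
          rw [IsMaximalChain, if_neg ht] at hct'
          obtain ⟨hsubX, ham2, hatop⟩ := hct'
          obtain ⟨ha2, has, hAim⟩ := hfulla ht
          refine ⟨a - 1, t, by omega, ?_, ?_, fun x hx => hsubX hx, ?_, ?_, ?_, ?_⟩
          · intro x
            rw [hAim]
            exact mem_prog
          · intro x
            rw [mem_chainSet]
            omega
          · rw [show a - 1 - 1 = a - 2 by omega]
            exact ham2
          · intro h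
            have hmm := hXmat.2 _ h
            rw [show a - 1 + 1 = a by omega] at hmm
            exact hmm (hsubX (mem_chainSet.mpr (by omega)))
          · intro h
            have hmem : a + 2 * (t - 1) ∈ M i := hsubX (mem_chainSet.mpr (by omega))
            have hmm := hXmat.2 _ hmem
            rw [show a + 2 * (t - 1) + 1 = a - 1 + 2 * t by omega] at hmm
            exact hmm h
          · rw [show a - 1 + 2 * t + 1 = a + 2 * t by omega]
            exact hatop
      have hC'up : ∀ y, y ∈ chainSet b u → y + 2 ∈ M (i + 1) → y + 2 ∈ chainSet b u := by
        intro y hy h2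
        rw [mem_chainSet] at hy ⊢
        by_contra hc
        rw [show y + 2 = b + 2 * u by omega] at h2
        exact hbp h2
      have hC'dn : ∀ y, y ∈ chainSet b u → 2 ≤ y → y - 2 ∈ M (i + 1) → y - 2 ∈ chainSet b u := by
        intro y hy h2 h3
        rw [mem_chainSet] at hy ⊢
        by_contra hc
        rw [show y - 2 = b - 2 by omega] at h3
        exact hbm2 h3
      have hAY : ∀ x, x ∈ augSet s a t → x ∈ M (i + 1) := fun x hx => (hYmem x).mpr (Or.inr hx)
      have hAC' : ∀ k ≤ m, α + 2 * k ∈ chainSet b u := by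
        have hx₀' := (hAa x₀).mp hx₀A
        obtain ⟨k₀, hk₀m, hk₀e⟩ : ∃ k₀, k₀ ≤ m ∧ x₀ = α + 2 * k₀ :=
          ⟨(x₀ - α) / 2, by omega, by omega⟩
        have hupk : ∀ d, k₀ + d ≤ m → α + 2 * (k₀ + d) ∈ chainSet b u := by
          intro d
          induction d with
          | zero => intro _; rw [show α + 2 * (k₀ + 0) = x₀ by omega]; exact hx₀C
          | succ d ih =>
            intro hd
            have h1 := ih (by omega)
            have h2 : α + 2 * (k₀ + d) + 2 ∈ M (i + 1) := by
              apply hAY; rw [hAa]; omega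
            have h3 := hC'up _ h1 h2
            rwa [show α + 2 * (k₀ + d) + 2 = α + 2 * (k₀ + (d + 1)) by ring] at h3
        have hdnk : ∀ d, d ≤ k₀ → α + 2 * (k₀ - d) ∈ chainSet b u := by
          intro d
          induction d with
          | zero => intro _; rw [show α + 2 * (k₀ - 0) = x₀ by omega]; exact hx₀C
          | succ d ih =>
            intro hd
            have h1 := ih (by omega)
            have h2 : α + 2 * (k₀ - d) - 2 ∈ M (i + 1) := by
              apply hAY; rw [hAa]; omega
            have h3 := hC'dn _ h1 (by omega) h2
            rwa [show α + 2 * (k₀ - d) - 2 = α + 2 * (k₀ - (d + 1)) by omega] at h3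
        intro k hk
        rcases le_or_gt k₀ k with hle | hlt
        · have hh := hupk (k - k₀) (by omega)
          rwa [show k₀ + (k - k₀) = k by omega] at hh
        · have hh := hdnk (k₀ - k) (by omega)
          rwa [show k₀ - (k₀ - k) = k by omega] at hh
      have hαC' : b ≤ α ∧ α < b + 2 * u ∧ (α - b) % 2 = 0 := by
        have hh := hAC' 0 (by omega)
        rwa [show α + 2 * 0 = α by ring, mem_chainSet] at hh
      have hαmC' : α + 2 * m < b + 2 * u := by
        have hh := hAC' m (le_refl m)
        rw [mem_chainSet] at hh
        omega
      obtain ⟨l, hbl⟩ : ∃ l, α = b + 2 * l := ⟨(α - b) / 2, by omega⟩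
      obtain ⟨r', hur⟩ : ∃ r', u = l + m + 1 + r' := ⟨u - (l + m + 1), by omega⟩
      have hLX : ∀ x ∈ chainSet b l, x ∈ M i := by
        intro x hx
        rw [mem_chainSet] at hx
        have hxC' : x ∈ chainSet b u := mem_chainSet.mpr (by omega)
        rcases (hYmem x).mp (hsubY hxC') with ⟨h, _⟩ | h
        · exact h
        · exfalso; rw [hAa] at h; omega
      have hRX : ∀ x ∈ chainSet (α + 2 * m + 2) r', x ∈ M i := by
        intro x hx
        rw [mem_chainSet] at hx
        have hxC' : x ∈ chainSet b u := mem_chainSet.mpr (by omega)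
        rcases (hYmem x).mp (hsubY hxC') with ⟨h, _⟩ | h
        · exact h
        · exfalso; rw [hAa] at h; omega
      obtain ⟨i₁, t₁, hmc1, hcs1, has1⟩ :
          ∃ i₁ t₁, IsMaximalChain s (M i) i₁ t₁ ∧ chainSet i₁ t₁ = chainSet b l ∧
            augSet s i₁ t₁ = (Finset.range (l + 1)).image (fun k => b - 1 + 2 * k) := by
        rcases Nat.eq_zero_or_pos l with hl0 | hlp
        · subst hl0
          refine ⟨α - 1, 0, ?_, ?_, ?_⟩
          · rw [IsMaximalChain, if_pos rfl]
            refine ⟨Finset.mem_Icc.mpr (by omega), ?_, hαm1X, ?_⟩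
            · intro h
              have h' : b - 2 ∈ M i := by rwa [show α - 1 - 1 = b - 2 by omega] at h
              have hh := toC _ h' hbm2
              rw [hCc] at hh
              omega
            · rwa [show α - 1 + 1 = α by omega]
          · ext x; rw [mem_chainSet, mem_chainSet]; omega
          · rw [augSet, if_pos rfl]
            ext x
            rw [Finset.mem_singleton, mem_prog]
            omega
        · have hl : l ≠ 0 := hlp.ne'
          refine ⟨b, l, ?_, rfl, ?_⟩
          · rw [IsMaximalChain, if_neg hl]
            refine ⟨fun x hx => hLX x hx, ?_, ?_⟩
            · intro h
              have hh := toC _ h hbm2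
              rw [hCc] at hh
              omega
            · rw [show b + 2 * l = α from hbl.symm]
              exact hα0X
          · ext x
            rw [augSet, if_neg hl]
            rw [Finset.mem_inter, mem_prog, Finset.mem_Icc]
            omega
      obtain ⟨i₂, t₂, hmc2, hcs2, has2⟩ :
          ∃ i₂ t₂, IsMaximalChain s (M i) i₂ t₂ ∧ chainSet i₂ t₂ = chainSet (α + 2 * m + 2) r' ∧
            augSet s i₂ t₂ = (Finset.range (r' + 1)).image (fun k => α + 2 * m + 1 + 2 * k) := by
        rcases Nat.eq_zero_or_pos r' with hr0 | hrp
        · subst hr0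
          refine ⟨α + 2 * m + 1, 0, ?_, ?_, ?_⟩
          · rw [IsMaximalChain, if_pos rfl]
            refine ⟨Finset.mem_Icc.mpr (by omega), ?_, hαtop1X, ?_⟩
            · rwa [show α + 2 * m + 1 - 1 = α + 2 * m by omega]
            · intro h
              have h' : b + 2 * u ∈ M i := by
                rwa [show α + 2 * m + 1 + 1 = b + 2 * u by omega] at h
              have hh := toC _ h' hbp
              rw [hCc] at hh
              omega
          · ext x; rw [mem_chainSet, mem_chainSet]; omega
          · rw [augSet, if_pos rfl]
            ext x
            rw [Finset.mem_singleton, mem_prog]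
            omega
        · have hr : r' ≠ 0 := hrp.ne'
          refine ⟨α + 2 * m + 2, r', ?_, rfl, ?_⟩
          · rw [IsMaximalChain, if_neg hr]
            refine ⟨fun x hx => hRX x hx, ?_, ?_⟩
            · rwa [show α + 2 * m + 2 - 2 = α + 2 * m by omega]
            · intro h
              have h' : b + 2 * u ∈ M i := by
                rwa [show α + 2 * m + 2 + 2 * r' = b + 2 * u by omega] at h
              have hh := toC _ h' hbp
              rw [hCc] at hh
              omega
          · ext x
            rw [augSet, if_neg hr]
            rw [Finset.mem_inter, mem_prog, mem_prog, Finset.mem_Icc]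
            omega
      refine ⟨i₁, t₁, i₂, t₂, hmc1, hmc2, ?_⟩
      rw [hZeq, hYeq, hcs1, hcs2, has1, has2]
      apply caseC_eq
      · intro x
        rw [mem_chainSet, mem_chainSet, mem_chainSet, hAa]
        omega
      · intro x
        rw [hBim, mem_prog, mem_prog, mem_prog, hCc]
        omega
      · exact hCX
      · intro x hx
        rw [hCc] at hx
        rintro (h | h) <;> rw [mem_chainSet] at h <;> omega
      · exact hdA
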